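/- arXiv:1210.5673 — 2 statements merged into one kernel-verified Lean document; each statement's English description precedes it below -/
import Mathlib

section
/- Let c : [0,1]² → ℝ be a nonnegative integrable function with ∫₀¹ c(x,y) dy = 1 for a.e. x and ∫₀¹ c(x,y) dx = 1 for a.e. y. Suppose there exist nonnegative integrable ε₁, ε₂ : [0,1] → ℝ with c(x,y) ≥ ε₁(x) + ε₂(y) for a.e. (x,y). Then for all f, g with ∫f² = ∫g² = 1 and ∫f = ∫g = 0, we have ∫∫ f(x)g(y)c(x,y) dx dy ≤ 1 − (1/2)(∫ε₁ + ∫ε₂). -/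
/-!
Expanding the square and using that both marginals of `c` are uniform gives
`∫∫ (f x - g y)² c = ∫ f² + ∫ g² - 2 ∫∫ f g c = 2 - 2 ∫∫ f g c`.
On the other hand `c ≥ ε₁(x) + ε₂(y)`, and for centred normalised `g` one has
`∫ (a - g y)² dy = a² + 1 ≥ 1` for every constant `a` (and symmetrically for `f`),
so the same integral is at least `∫ ε₁ + ∫ ε₂`.
-/

open MeasureTheory

section

variable {α β : Type*} [MeasurableSpace α] [MeasurableSpace β] {μ : Measure α} {ν : Measure β}

theorem integral_sub_sq_of_integral_eq_zero [IsProbabilityMeasure ν] {g : β → ℝ}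
    (hg : MemLp g 2 ν) (hg0 : ∫ y, g y ∂ν = 0) (a : ℝ) :
    ∫ y, (a - g y) ^ 2 ∂ν = a ^ 2 + ∫ y, g y ^ 2 ∂ν := by
  have hlin : Integrable (fun y => a ^ 2 - 2 * a * g y) ν :=
    (integrable_const _).sub ((hg.integrable one_le_two).const_mul _)
  calc ∫ y, (a - g y) ^ 2 ∂ν = ∫ y, (a ^ 2 - 2 * a * g y) + g y ^ 2 ∂ν := by
        congr 1; ext y; ring
    _ = a ^ 2 + ∫ y, g y ^ 2 ∂ν := by
        rw [integral_add hlin hg.integrable_sq,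
          integral_sub (integrable_const _) ((hg.integrable one_le_two).const_mul _),
          integral_const_mul, hg0]
        simp

variable [SFinite μ] [SFinite ν] {c : α → β → ℝ} {f : α → ℝ} {g : β → ℝ}

theorem integrable_fst_mul_of_integral_right_eq_one
    (hc : Integrable (fun p : α × β => c p.1 p.2) (μ.prod ν))
    (hc0 : ∀ᵐ p ∂(μ.prod ν), 0 ≤ c p.1 p.2) (hmarg : ∀ᵐ x ∂μ, ∫ y, c x y ∂ν = 1)
    {φ : α → ℝ} (hφ : Integrable φ μ) :
    Integrable (fun p : α × β => φ p.1 * c p.1 p.2) (μ.prod ν) := by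
  refine (integrable_prod_iff (f := fun p : α × β => φ p.1 * c p.1 p.2)
    (hφ.aestronglyMeasurable.comp_fst.mul hc.aestronglyMeasurable)).2 ⟨?_, ?_⟩
  · filter_upwards [hc.prod_right_ae] with x hx using hx.const_mul _
  · refine hφ.norm.congr ?_
    filter_upwards [hmarg, Measure.ae_ae_of_ae_prod hc0] with x h1 h0
    simp only [norm_mul]
    rw [integral_const_mul, integral_congr_ae (h0.mono fun y hy => Real.norm_of_nonneg hy), h1,
      mul_one]

theorem integral_fst_mul_of_integral_right_eq_one
    (hc : Integrable (fun p : α × β => c p.1 p.2) (μ.prod ν))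
    (hc0 : ∀ᵐ p ∂(μ.prod ν), 0 ≤ c p.1 p.2) (hmarg : ∀ᵐ x ∂μ, ∫ y, c x y ∂ν = 1)
    {φ : α → ℝ} (hφ : Integrable φ μ) :
    ∫ p, φ p.1 * c p.1 p.2 ∂(μ.prod ν) = ∫ x, φ x ∂μ := by
  rw [integral_prod _ (integrable_fst_mul_of_integral_right_eq_one hc hc0 hmarg hφ)]
  refine integral_congr_ae ?_
  filter_upwards [hmarg] with x h1
  rw [integral_const_mul, h1, mul_one]

theorem integrable_snd_mul_of_integral_left_eq_one
    (hc : Integrable (fun p : α × β => c p.1 p.2) (μ.prod ν))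
    (hc0 : ∀ᵐ p ∂(μ.prod ν), 0 ≤ c p.1 p.2) (hmarg : ∀ᵐ y ∂ν, ∫ x, c x y ∂μ = 1)
    {ψ : β → ℝ} (hψ : Integrable ψ ν) :
    Integrable (fun p : α × β => ψ p.2 * c p.1 p.2) (μ.prod ν) :=
  (integrable_fst_mul_of_integral_right_eq_one (c := fun y x => c x y) hc.swap
    (Measure.measurePreserving_swap.quasiMeasurePreserving.ae hc0) hmarg hψ).swap

theorem integral_snd_mul_of_integral_left_eq_one
    (hc : Integrable (fun p : α × β => c p.1 p.2) (μ.prod ν))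
    (hc0 : ∀ᵐ p ∂(μ.prod ν), 0 ≤ c p.1 p.2) (hmarg : ∀ᵐ y ∂ν, ∫ x, c x y ∂μ = 1)
    {ψ : β → ℝ} (hψ : Integrable ψ ν) :
    ∫ p, ψ p.2 * c p.1 p.2 ∂(μ.prod ν) = ∫ y, ψ y ∂ν := by
  rw [← integral_prod_swap]
  exact integral_fst_mul_of_integral_right_eq_one (c := fun y x => c x y) hc.swap
    (Measure.measurePreserving_swap.quasiMeasurePreserving.ae hc0) hmarg hψ

theorem integrable_fst_mul_snd_mul
    (hc : Integrable (fun p : α × β => c p.1 p.2) (μ.prod ν))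
    (hc0 : ∀ᵐ p ∂(μ.prod ν), 0 ≤ c p.1 p.2) (hmarg₁ : ∀ᵐ x ∂μ, ∫ y, c x y ∂ν = 1)
    (hmarg₂ : ∀ᵐ y ∂ν, ∫ x, c x y ∂μ = 1) (hf : MemLp f 2 μ) (hg : MemLp g 2 ν) :
    Integrable (fun p : α × β => f p.1 * g p.2 * c p.1 p.2) (μ.prod ν) := by
  refine ((integrable_fst_mul_of_integral_right_eq_one hc hc0 hmarg₁ hf.integrable_sq).add
    (integrable_snd_mul_of_integral_left_eq_one hc hc0 hmarg₂ hg.integrable_sq)).mono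
    ((hf.aestronglyMeasurable.comp_fst.mul hg.aestronglyMeasurable.comp_snd).mul
      hc.aestronglyMeasurable) ?_
  filter_upwards [hc0] with p hp
  have hfg : |f p.1 * g p.2| ≤ f p.1 ^ 2 + g p.2 ^ 2 := by
    rw [abs_le]; constructor <;> nlinarith [sq_nonneg (f p.1 + g p.2), sq_nonneg (f p.1 - g p.2)]
  simp only [Pi.add_apply]
  rw [Real.norm_eq_abs, Real.norm_of_nonneg (by positivity), abs_mul, abs_of_nonneg hp]
  nlinarith

theorem integrable_sq_sub_mul
    (hc : Integrable (fun p : α × β => c p.1 p.2) (μ.prod ν))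
    (hc0 : ∀ᵐ p ∂(μ.prod ν), 0 ≤ c p.1 p.2) (hmarg₁ : ∀ᵐ x ∂μ, ∫ y, c x y ∂ν = 1)
    (hmarg₂ : ∀ᵐ y ∂ν, ∫ x, c x y ∂μ = 1) (hf : MemLp f 2 μ) (hg : MemLp g 2 ν) :
    Integrable (fun p : α × β => (f p.1 - g p.2) ^ 2 * c p.1 p.2) (μ.prod ν) :=
  (((integrable_fst_mul_of_integral_right_eq_one hc hc0 hmarg₁ hf.integrable_sq).add
    (integrable_snd_mul_of_integral_left_eq_one hc hc0 hmarg₂ hg.integrable_sq)).sub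
    ((integrable_fst_mul_snd_mul hc hc0 hmarg₁ hmarg₂ hf hg).const_mul 2)).congr
    (Filter.Eventually.of_forall fun p => by simp only [Pi.add_apply, Pi.sub_apply]; ring)

theorem integral_sq_sub_mul
    (hc : Integrable (fun p : α × β => c p.1 p.2) (μ.prod ν))
    (hc0 : ∀ᵐ p ∂(μ.prod ν), 0 ≤ c p.1 p.2) (hmarg₁ : ∀ᵐ x ∂μ, ∫ y, c x y ∂ν = 1)
    (hmarg₂ : ∀ᵐ y ∂ν, ∫ x, c x y ∂μ = 1) (hf : MemLp f 2 μ) (hg : MemLp g 2 ν) :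
    ∫ p, (f p.1 - g p.2) ^ 2 * c p.1 p.2 ∂(μ.prod ν) =
      ∫ x, f x ^ 2 ∂μ + ∫ y, g y ^ 2 ∂ν - 2 * ∫ p, f p.1 * g p.2 * c p.1 p.2 ∂(μ.prod ν) := by
  have hf2 := integrable_fst_mul_of_integral_right_eq_one hc hc0 hmarg₁ hf.integrable_sq
  have hg2 := integrable_snd_mul_of_integral_left_eq_one hc hc0 hmarg₂ hg.integrable_sq
  have hfg := integrable_fst_mul_snd_mul hc hc0 hmarg₁ hmarg₂ hf hg
  calc ∫ p, (f p.1 - g p.2) ^ 2 * c p.1 p.2 ∂(μ.prod ν)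
      = ∫ p, (f p.1 ^ 2 * c p.1 p.2 + g p.2 ^ 2 * c p.1 p.2)
          - 2 * (f p.1 * g p.2 * c p.1 p.2) ∂(μ.prod ν) := by
        congr 1; ext p; ring
    _ = _ := by
        have hsum : Integrable
            (fun p : α × β => f p.1 ^ 2 * c p.1 p.2 + g p.2 ^ 2 * c p.1 p.2) (μ.prod ν) :=
          hf2.add hg2
        rw [integral_sub hsum (hfg.const_mul 2), integral_add hf2 hg2, integral_const_mul,
          integral_fst_mul_of_integral_right_eq_one hc hc0 hmarg₁ hf.integrable_sq,
          integral_snd_mul_of_integral_left_eq_one hc hc0 hmarg₂ hg.integrable_sq]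

theorem integral_le_integral_sq_sub_mul_fst [IsProbabilityMeasure ν] {ε : α → ℝ}
    (hε : Integrable ε μ) (hε0 : 0 ≤ᵐ[μ] ε) (hg : MemLp g 2 ν) (hg0 : ∫ y, g y ∂ν = 0)
    (hg2 : ∫ y, g y ^ 2 ∂ν = 1)
    (hint : Integrable (fun p : α × β => (f p.1 - g p.2) ^ 2 * ε p.1) (μ.prod ν)) :
    ∫ x, ε x ∂μ ≤ ∫ p, (f p.1 - g p.2) ^ 2 * ε p.1 ∂(μ.prod ν) := by
  rw [integral_prod _ hint]
  refine integral_mono_ae hε hint.integral_prod_left ?_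
  filter_upwards [hε0] with x hx
  rw [integral_mul_const, integral_sub_sq_of_integral_eq_zero hg hg0, hg2]
  nlinarith [mul_nonneg (sq_nonneg (f x)) hx]

theorem integral_le_integral_sq_sub_mul_snd [IsProbabilityMeasure μ] {ε : β → ℝ}
    (hε : Integrable ε ν) (hε0 : 0 ≤ᵐ[ν] ε) (hf : MemLp f 2 μ) (hf0 : ∫ x, f x ∂μ = 0)
    (hf2 : ∫ x, f x ^ 2 ∂μ = 1)
    (hint : Integrable (fun p : α × β => (f p.1 - g p.2) ^ 2 * ε p.2) (μ.prod ν)) :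
    ∫ y, ε y ∂ν ≤ ∫ p, (f p.1 - g p.2) ^ 2 * ε p.2 ∂(μ.prod ν) := by
  simp_rw [sub_sq_comm (f _)] at hint ⊢
  rw [← integral_prod_swap]
  exact integral_le_integral_sq_sub_mul_fst hε hε0 hf hf0 hf2 hint.swap

theorem integral_add_integral_le_integral_sq_sub_mul [IsProbabilityMeasure μ]
    [IsProbabilityMeasure ν] {ε₁ : α → ℝ} {ε₂ : β → ℝ}
    (hε₁ : Integrable ε₁ μ) (hε₂ : Integrable ε₂ ν) (hε₁0 : 0 ≤ᵐ[μ] ε₁) (hε₂0 : 0 ≤ᵐ[ν] ε₂)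
    (hdom : ∀ᵐ p ∂(μ.prod ν), ε₁ p.1 + ε₂ p.2 ≤ c p.1 p.2)
    (hf : MemLp f 2 μ) (hf0 : ∫ x, f x ∂μ = 0) (hf2 : ∫ x, f x ^ 2 ∂μ = 1)
    (hg : MemLp g 2 ν) (hg0 : ∫ y, g y ∂ν = 0) (hg2 : ∫ y, g y ^ 2 ∂ν = 1)
    (hint : Integrable (fun p : α × β => (f p.1 - g p.2) ^ 2 * c p.1 p.2) (μ.prod ν)) :
    ∫ x, ε₁ x ∂μ + ∫ y, ε₂ y ∂ν ≤ ∫ p, (f p.1 - g p.2) ^ 2 * c p.1 p.2 ∂(μ.prod ν) := by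
  have hsq : AEStronglyMeasurable (fun p : α × β => (f p.1 - g p.2) ^ 2) (μ.prod ν) :=
    (hf.aestronglyMeasurable.comp_fst.sub hg.aestronglyMeasurable.comp_snd).pow 2
  have hε₁0' : ∀ᵐ p ∂(μ.prod ν), 0 ≤ ε₁ p.1 := Measure.quasiMeasurePreserving_fst.ae hε₁0
  have hε₂0' : ∀ᵐ p ∂(μ.prod ν), 0 ≤ ε₂ p.2 := Measure.quasiMeasurePreserving_snd.ae hε₂0
  -- `ε₁ x * f x ^ 2` need not be integrable; these come from domination by `(f x - g y)² c`.
  have hint₁ : Integrable (fun p : α × β => (f p.1 - g p.2) ^ 2 * ε₁ p.1) (μ.prod ν) := by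
    refine hint.mono (hsq.mul hε₁.aestronglyMeasurable.comp_fst) ?_
    filter_upwards [hdom, hε₁0', hε₂0'] with p hd h₁ h₂
    simp only [norm_mul, Real.norm_eq_abs]
    gcongr
    linarith
  have hint₂ : Integrable (fun p : α × β => (f p.1 - g p.2) ^ 2 * ε₂ p.2) (μ.prod ν) := by
    refine hint.mono (hsq.mul hε₂.aestronglyMeasurable.comp_snd) ?_
    filter_upwards [hdom, hε₁0', hε₂0'] with p hd h₁ h₂
    simp only [norm_mul, Real.norm_eq_abs]
    gcongr
    linarith
  calc ∫ x, ε₁ x ∂μ + ∫ y, ε₂ y ∂ν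
      ≤ ∫ p, (f p.1 - g p.2) ^ 2 * ε₁ p.1 ∂(μ.prod ν)
          + ∫ p, (f p.1 - g p.2) ^ 2 * ε₂ p.2 ∂(μ.prod ν) :=
        add_le_add (integral_le_integral_sq_sub_mul_fst hε₁ hε₁0 hg hg0 hg2 hint₁)
          (integral_le_integral_sq_sub_mul_snd hε₂ hε₂0 hf hf0 hf2 hint₂)
    _ = ∫ p, (f p.1 - g p.2) ^ 2 * (ε₁ p.1 + ε₂ p.2) ∂(μ.prod ν) := by
        rw [← integral_add hint₁ hint₂]; congr 1; ext p; ring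
    _ ≤ ∫ p, (f p.1 - g p.2) ^ 2 * c p.1 p.2 ∂(μ.prod ν) := by
        refine integral_mono_ae (hint₁.add hint₂ |>.congr ?_) hint ?_
        · exact Filter.Eventually.of_forall fun p => by simp only [Pi.add_apply]; ring
        · filter_upwards [hdom] with p hd
          exact mul_le_mul_of_nonneg_left hd (sq_nonneg _)

end

theorem copula_density_correlation_bound
    (c : ℝ → ℝ → ℝ) (ε₁ ε₂ : ℝ → ℝ)
    (hc_nonneg : ∀ᵐ p ∂(volume.restrict (Set.Icc (0:ℝ) 1 ×ˢ Set.Icc (0:ℝ) 1)),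
      0 ≤ c p.1 p.2)
    (hc_int : IntegrableOn (fun p : ℝ × ℝ => c p.1 p.2)
      (Set.Icc (0:ℝ) 1 ×ˢ Set.Icc (0:ℝ) 1))
    (hmarg1 : ∀ᵐ x ∂(volume.restrict (Set.Icc (0:ℝ) 1)),
      ∫ y in Set.Icc (0:ℝ) 1, c x y = 1)
    (hmarg2 : ∀ᵐ y ∂(volume.restrict (Set.Icc (0:ℝ) 1)),
      ∫ x in Set.Icc (0:ℝ) 1, c x y = 1)
    (hε₁_nonneg : ∀ x ∈ Set.Icc (0:ℝ) 1, 0 ≤ ε₁ x)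
    (hε₂_nonneg : ∀ x ∈ Set.Icc (0:ℝ) 1, 0 ≤ ε₂ x)
    (hε₁_int : IntegrableOn ε₁ (Set.Icc (0:ℝ) 1))
    (hε₂_int : IntegrableOn ε₂ (Set.Icc (0:ℝ) 1))
    (hdom : ∀ᵐ p ∂(volume.restrict (Set.Icc (0:ℝ) 1 ×ˢ Set.Icc (0:ℝ) 1)),
      ε₁ p.1 + ε₂ p.2 ≤ c p.1 p.2) :
    ∀ f g : ℝ → ℝ,
      MemLp f 2 (volume.restrict (Set.Icc (0:ℝ) 1)) →
      MemLp g 2 (volume.restrict (Set.Icc (0:ℝ) 1)) →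
      (∫ x in Set.Icc (0:ℝ) 1, (f x) ^ 2) = 1 →
      (∫ x in Set.Icc (0:ℝ) 1, (g x) ^ 2) = 1 →
      (∫ x in Set.Icc (0:ℝ) 1, f x) = 0 →
      (∫ x in Set.Icc (0:ℝ) 1, g x) = 0 →
      (∫ p in Set.Icc (0:ℝ) 1 ×ˢ Set.Icc (0:ℝ) 1, f p.1 * g p.2 * c p.1 p.2) ≤
        1 - (1 / 2) * ((∫ x in Set.Icc (0:ℝ) 1, ε₁ x) + ∫ y in Set.Icc (0:ℝ) 1, ε₂ y) := by
  intro f g hf hg hf2 hg2 hf0 hg0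
  set μ : Measure ℝ := volume.restrict (Set.Icc (0:ℝ) 1)
  have : IsProbabilityMeasure μ := ⟨by simp [μ]⟩
  have hprod : volume.restrict (Set.Icc (0:ℝ) 1 ×ˢ Set.Icc (0:ℝ) 1) = μ.prod μ := by
    rw [Measure.prod_restrict, ← Measure.volume_eq_prod]
  rw [hprod] at hc_nonneg hdom ⊢
  rw [IntegrableOn, hprod] at hc_int
  have hε₁0 : 0 ≤ᵐ[μ] ε₁ := ae_restrict_of_forall_mem measurableSet_Icc hε₁_nonneg
  have hε₂0 : 0 ≤ᵐ[μ] ε₂ := ae_restrict_of_forall_mem measurableSet_Icc hε₂_nonneg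
  have hlower := integral_add_integral_le_integral_sq_sub_mul hε₁_int hε₂_int hε₁0 hε₂0 hdom
    hf hf0 hf2 hg hg0 hg2 (integrable_sq_sub_mul hc_int hc_nonneg hmarg1 hmarg2 hf hg)
  rw [integral_sq_sub_mul hc_int hc_nonneg hmarg1 hmarg2 hf hg, hf2, hg2] at hlower
  linarith
end

section
/- Under the hypotheses of the previous statement, and additionally assuming ∫₀¹ ε₁ + ∫₀¹ ε₂ > 0, one has sup over mean-zero, L²-normalized f, g of |∫∫ f(x)g(y)c(x,y) dx dy| ≤ 1 − (1/2)(∫ε₁ + ∫ε₂) < 1. -/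
/-!
Write `c = w + ε₁(x) + ε₂(y)` with `w ≥ 0`. Since `f` and `g` have mean zero, the part
`ε₁(x) + ε₂(y)` contributes nothing to `∫∫ f(x) g(y) c`, and by AM-GM
`|f(x) g(y)| w ≤ (f(x)² + g(y)²) w / 2`. The marginal conditions give
`∫∫ f(x)² w ≤ 1 - ∫ ε₂` and `∫∫ g(y)² w ≤ 1 - ∫ ε₁`. Integrating `ε₁(x) + ε₂(y) ≤ c` in one
variable shows `ε₁, ε₂ ≤ 1` a.e., which makes every product that the splitting needs integrable.
-/

open MeasureTheory

theorem abs_mul_mul_le_of_nonneg {u v w : ℝ} (hw : 0 ≤ w) :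
    |u * v * w| ≤ (u ^ 2 * w + v ^ 2 * w) / 2 := by
  rw [abs_mul, abs_of_nonneg hw, abs_mul]
  nlinarith [mul_nonneg (sq_nonneg (|u| - |v|)) hw, sq_abs u, sq_abs v]

section WeightedAMGM

variable {Ω : Type*} [MeasurableSpace Ω] {ρ : Measure Ω} {u v w : Ω → ℝ}

theorem integrable_mul_mul_of_sq_mul (hw : ∀ᵐ z ∂ρ, 0 ≤ w z)
    (hm : AEStronglyMeasurable (fun z => u z * v z * w z) ρ)
    (hu : Integrable (fun z => u z ^ 2 * w z) ρ) (hv : Integrable (fun z => v z ^ 2 * w z) ρ) :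
    Integrable (fun z => u z * v z * w z) ρ :=
  ((hu.add hv).div_const 2).mono' hm <| hw.mono fun _ hz => abs_mul_mul_le_of_nonneg hz

theorem abs_integral_mul_mul_le (hw : ∀ᵐ z ∂ρ, 0 ≤ w z)
    (hm : AEStronglyMeasurable (fun z => u z * v z * w z) ρ)
    (hu : Integrable (fun z => u z ^ 2 * w z) ρ) (hv : Integrable (fun z => v z ^ 2 * w z) ρ) :
    |∫ z, u z * v z * w z ∂ρ| ≤ ((∫ z, u z ^ 2 * w z ∂ρ) + ∫ z, v z ^ 2 * w z ∂ρ) / 2 :=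
  calc |∫ z, u z * v z * w z ∂ρ| ≤ ∫ z, |u z * v z * w z| ∂ρ := abs_integral_le_integral_abs
    _ ≤ ∫ z, (u z ^ 2 * w z + v z ^ 2 * w z) / 2 ∂ρ :=
      integral_mono_ae (integrable_mul_mul_of_sq_mul hw hm hu hv).abs ((hu.add hv).div_const 2)
        (hw.mono fun _ hz => abs_mul_mul_le_of_nonneg hz)
    _ = ((∫ z, u z ^ 2 * w z ∂ρ) + ∫ z, v z ^ 2 * w z ∂ρ) / 2 := by
      rw [integral_div, integral_add hu hv]

end WeightedAMGM

section CopulaDensity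

variable {α β : Type*} [MeasurableSpace α] [MeasurableSpace β] {μ : Measure α} {ν : Measure β}
  {c : α → β → ℝ}

structure IsCopulaDensity (μ : Measure α) (ν : Measure β) (c : α → β → ℝ) : Prop where
  nonneg : ∀ᵐ p ∂μ.prod ν, 0 ≤ c p.1 p.2
  integrable : Integrable (fun p => c p.1 p.2) (μ.prod ν)
  integral_fst : ∀ᵐ x ∂μ, ∫ y, c x y ∂ν = 1
  integral_snd : ∀ᵐ y ∂ν, ∫ x, c x y ∂μ = 1

theorem integrable_fst_mul_of_integral_eq_one [SFinite μ] [SFinite ν] {φ : α → ℝ}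
    (hc0 : ∀ᵐ p ∂μ.prod ν, 0 ≤ c p.1 p.2) (hc : Integrable (fun p => c p.1 p.2) (μ.prod ν))
    (hmarg : ∀ᵐ x ∂μ, ∫ y, c x y ∂ν = 1) (hφ : Integrable φ μ) :
    Integrable (fun p => φ p.1 * c p.1 p.2) (μ.prod ν) := by
  have hm : AEStronglyMeasurable (fun p => φ p.1 * c p.1 p.2) (μ.prod ν) :=
    hφ.aestronglyMeasurable.comp_fst.mul hc.aestronglyMeasurable
  refine (integrable_prod_iff hm).2 ⟨?_, hφ.norm.congr ?_⟩
  · filter_upwards [hc.prod_right_ae] with x hx using hx.const_mul _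
  · filter_upwards [Measure.ae_ae_of_ae_prod hc0, hmarg] with x hx hmx
    calc ‖φ x‖ = ‖φ x‖ * ∫ y, c x y ∂ν := by rw [hmx, mul_one]
      _ = ∫ y, ‖φ x * c x y‖ ∂ν := by
        rw [← integral_const_mul]
        refine integral_congr_ae ?_
        filter_upwards [hx] with y hy
        rw [norm_mul, Real.norm_of_nonneg hy]

theorem integral_fst_mul_of_integral_eq_one [SFinite μ] [SFinite ν] {φ : α → ℝ}
    (hc0 : ∀ᵐ p ∂μ.prod ν, 0 ≤ c p.1 p.2) (hc : Integrable (fun p => c p.1 p.2) (μ.prod ν))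
    (hmarg : ∀ᵐ x ∂μ, ∫ y, c x y ∂ν = 1) (hφ : Integrable φ μ) :
    ∫ p, φ p.1 * c p.1 p.2 ∂μ.prod ν = ∫ x, φ x ∂μ := by
  rw [integral_prod _ (integrable_fst_mul_of_integral_eq_one hc0 hc hmarg hφ)]
  refine integral_congr_ae ?_
  filter_upwards [hmarg] with x hx
  rw [integral_const_mul, hx, mul_one]

variable {ε₁ : α → ℝ} {ε₂ : β → ℝ}

theorem ae_add_integral_le_one [SFinite μ] [IsProbabilityMeasure ν]
    (hc : Integrable (fun p => c p.1 p.2) (μ.prod ν)) (hmarg : ∀ᵐ x ∂μ, ∫ y, c x y ∂ν = 1)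
    (hε₂ : Integrable ε₂ ν) (hdom : ∀ᵐ p ∂μ.prod ν, ε₁ p.1 + ε₂ p.2 ≤ c p.1 p.2) :
    ∀ᵐ x ∂μ, ε₁ x + ∫ y, ε₂ y ∂ν ≤ 1 := by
  filter_upwards [hc.prod_right_ae, Measure.ae_ae_of_ae_prod hdom, hmarg] with x hcx hdx hmx
  calc ε₁ x + ∫ y, ε₂ y ∂ν = ∫ y, ε₁ x + ε₂ y ∂ν := by
        rw [integral_add (integrable_const _) hε₂, integral_const, probReal_univ, one_smul]
    _ ≤ ∫ y, c x y ∂ν := integral_mono_ae ((integrable_const _).add hε₂) hcx hdx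
    _ = 1 := hmx

theorem ae_norm_le_one_of_add_le [SFinite μ] [IsProbabilityMeasure ν]
    (hc : Integrable (fun p => c p.1 p.2) (μ.prod ν)) (hmarg : ∀ᵐ x ∂μ, ∫ y, c x y ∂ν = 1)
    (hε₂ : Integrable ε₂ ν) (hε₁0 : ∀ᵐ x ∂μ, 0 ≤ ε₁ x) (hε₂0 : ∀ᵐ y ∂ν, 0 ≤ ε₂ y)
    (hdom : ∀ᵐ p ∂μ.prod ν, ε₁ p.1 + ε₂ p.2 ≤ c p.1 p.2) :
    ∀ᵐ x ∂μ, ‖ε₁ x‖ ≤ 1 := by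
  filter_upwards [ae_add_integral_le_one hc hmarg hε₂ hdom, hε₁0] with x hx h0
  rw [Real.norm_of_nonneg h0]
  linarith [integral_nonneg_of_ae hε₂0]

theorem integral_add_integral_le_one [IsProbabilityMeasure μ] [IsProbabilityMeasure ν]
    (hc : Integrable (fun p => c p.1 p.2) (μ.prod ν)) (hmarg : ∀ᵐ x ∂μ, ∫ y, c x y ∂ν = 1)
    (hε₁ : Integrable ε₁ μ) (hε₂ : Integrable ε₂ ν)
    (hdom : ∀ᵐ p ∂μ.prod ν, ε₁ p.1 + ε₂ p.2 ≤ c p.1 p.2) :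
    (∫ x, ε₁ x ∂μ) + ∫ y, ε₂ y ∂ν ≤ 1 :=
  calc (∫ x, ε₁ x ∂μ) + ∫ y, ε₂ y ∂ν = ∫ x, ε₁ x + ∫ y, ε₂ y ∂ν ∂μ := by
        rw [integral_add hε₁ (integrable_const _), integral_const, probReal_univ, one_smul]
    _ ≤ ∫ _, 1 ∂μ := integral_mono_ae (hε₁.add (integrable_const _)) (integrable_const _)
        (ae_add_integral_le_one hc hmarg hε₂ hdom)
    _ = 1 := by simp

theorem integral_sq_fst_mul_sub_le [SFinite μ] [IsFiniteMeasure ν] {f : α → ℝ}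
    (hc0 : ∀ᵐ p ∂μ.prod ν, 0 ≤ c p.1 p.2) (hc : Integrable (fun p => c p.1 p.2) (μ.prod ν))
    (hmarg : ∀ᵐ x ∂μ, ∫ y, c x y ∂ν = 1) (hε₁0 : ∀ᵐ x ∂μ, 0 ≤ ε₁ x) (hε₂ : Integrable ε₂ ν)
    (hf : MemLp f 2 μ) (hf2 : ∫ x, f x ^ 2 ∂μ = 1)
    (hf2ε₁ : Integrable (fun x => f x ^ 2 * ε₁ x) μ) :
    Integrable (fun p => f p.1 ^ 2 * (c p.1 p.2 - ε₁ p.1 - ε₂ p.2)) (μ.prod ν) ∧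
      ∫ p, f p.1 ^ 2 * (c p.1 p.2 - ε₁ p.1 - ε₂ p.2) ∂μ.prod ν ≤ 1 - ∫ y, ε₂ y ∂ν := by
  have hf2i : Integrable (fun x => f x ^ 2) μ := hf.integrable_sq
  have hc' := integrable_fst_mul_of_integral_eq_one hc0 hc hmarg hf2i
  have hε₁' : Integrable (fun p => f p.1 ^ 2 * ε₁ p.1) (μ.prod ν) := hf2ε₁.comp_fst ν
  have hε₂' : Integrable (fun p => f p.1 ^ 2 * ε₂ p.2) (μ.prod ν) := hf2i.mul_prod hε₂
  have hdiff : Integrable (fun p => f p.1 ^ 2 * c p.1 p.2 - f p.1 ^ 2 * ε₁ p.1) (μ.prod ν) :=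
    hc'.sub hε₁'
  have hsplit : (fun p : α × β => f p.1 ^ 2 * (c p.1 p.2 - ε₁ p.1 - ε₂ p.2)) =
      fun p => f p.1 ^ 2 * c p.1 p.2 - f p.1 ^ 2 * ε₁ p.1 - f p.1 ^ 2 * ε₂ p.2 := by
    ext; ring
  have hε₁f : 0 ≤ ∫ p, f p.1 ^ 2 * ε₁ p.1 ∂μ.prod ν := by
    rw [integral_fun_fst (fun x => f x ^ 2 * ε₁ x)]
    exact smul_nonneg measureReal_nonneg <| integral_nonneg_of_ae <| by
      filter_upwards [hε₁0] with x hx using mul_nonneg (sq_nonneg _) hx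
  rw [hsplit, integral_sub hdiff hε₂', integral_sub hc' hε₁',
    integral_fst_mul_of_integral_eq_one hc0 hc hmarg hf2i,
    integral_prod_mul (fun x => f x ^ 2) ε₂, hf2, one_mul]
  exact ⟨hdiff.sub hε₂', by linarith⟩

theorem integral_sq_snd_mul_sub_le [IsFiniteMeasure μ] [SFinite ν] {g : β → ℝ}
    (hc0 : ∀ᵐ p ∂μ.prod ν, 0 ≤ c p.1 p.2) (hc : Integrable (fun p => c p.1 p.2) (μ.prod ν))
    (hmarg : ∀ᵐ y ∂ν, ∫ x, c x y ∂μ = 1) (hε₁ : Integrable ε₁ μ) (hε₂0 : ∀ᵐ y ∂ν, 0 ≤ ε₂ y)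
    (hg : MemLp g 2 ν) (hg2 : ∫ y, g y ^ 2 ∂ν = 1)
    (hg2ε₂ : Integrable (fun y => g y ^ 2 * ε₂ y) ν) :
    Integrable (fun p => g p.2 ^ 2 * (c p.1 p.2 - ε₁ p.1 - ε₂ p.2)) (μ.prod ν) ∧
      ∫ p, g p.2 ^ 2 * (c p.1 p.2 - ε₁ p.1 - ε₂ p.2) ∂μ.prod ν ≤ 1 - ∫ x, ε₁ x ∂μ := by
  obtain ⟨hint, hle⟩ := integral_sq_fst_mul_sub_le (c := fun y x => c x y)
    (Measure.measurePreserving_swap.quasiMeasurePreserving.ae hc0) hc.swap hmarg hε₂0 hε₁ hg hg2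
    hg2ε₂
  have hswap : (fun p : α × β => g p.2 ^ 2 * (c p.1 p.2 - ε₁ p.1 - ε₂ p.2)) =
      (fun q : β × α => g q.1 ^ 2 * (c q.2 q.1 - ε₂ q.1 - ε₁ q.2)) ∘ Prod.swap := by
    ext; simp only [Function.comp, Prod.fst_swap, Prod.snd_swap, sub_right_comm]
  rw [hswap]
  exact ⟨hint.swap, (integral_prod_swap _).trans_le hle⟩

theorem integral_mul_mul_add_eq_zero [SFinite μ] [SFinite ν] {f : α → ℝ} {g : β → ℝ}
    (hf : Integrable f μ) (hg : Integrable g ν) (hfε₁ : Integrable (fun x => f x * ε₁ x) μ)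
    (hgε₂ : Integrable (fun y => g y * ε₂ y) ν) (hf0 : ∫ x, f x ∂μ = 0) (hg0 : ∫ y, g y ∂ν = 0) :
    Integrable (fun p => f p.1 * g p.2 * (ε₁ p.1 + ε₂ p.2)) (μ.prod ν) ∧
      ∫ p, f p.1 * g p.2 * (ε₁ p.1 + ε₂ p.2) ∂μ.prod ν = 0 := by
  have h₁ : Integrable (fun p => f p.1 * ε₁ p.1 * g p.2) (μ.prod ν) := hfε₁.mul_prod hg
  have h₂ : Integrable (fun p => f p.1 * (g p.2 * ε₂ p.2)) (μ.prod ν) := hf.mul_prod hgε₂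
  have hsplit : (fun p : α × β => f p.1 * g p.2 * (ε₁ p.1 + ε₂ p.2)) =
      fun p => f p.1 * ε₁ p.1 * g p.2 + f p.1 * (g p.2 * ε₂ p.2) := by
    ext; ring
  rw [hsplit, integral_add h₁ h₂, integral_prod_mul (fun x => f x * ε₁ x) g,
    integral_prod_mul f (fun y => g y * ε₂ y), hf0, hg0]
  exact ⟨h₁.add h₂, by ring⟩

theorem IsCopulaDensity.abs_integral_mul_mul_le_one_sub [IsProbabilityMeasure μ]
    [IsProbabilityMeasure ν] (hc : IsCopulaDensity μ ν c) {f : α → ℝ} {g : β → ℝ}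
    (hε₁ : Integrable ε₁ μ) (hε₂ : Integrable ε₂ ν) (hε₁0 : ∀ᵐ x ∂μ, 0 ≤ ε₁ x) (hε₂0 : ∀ᵐ y ∂ν, 0 ≤ ε₂ y)
    (hdom : ∀ᵐ p ∂μ.prod ν, ε₁ p.1 + ε₂ p.2 ≤ c p.1 p.2) (hf : MemLp f 2 μ) (hg : MemLp g 2 ν)
    (hf2 : ∫ x, f x ^ 2 ∂μ = 1) (hg2 : ∫ y, g y ^ 2 ∂ν = 1) (hf0 : ∫ x, f x ∂μ = 0)
    (hg0 : ∫ y, g y ∂ν = 0) :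
    |∫ p, f p.1 * g p.2 * c p.1 p.2 ∂μ.prod ν| ≤
      1 - 1 / 2 * ((∫ x, ε₁ x ∂μ) + ∫ y, ε₂ y ∂ν) := by
  have hε₁1 := ae_norm_le_one_of_add_le hc.integrable hc.integral_fst hε₂ hε₁0 hε₂0 hdom
  have hε₂1 := ae_norm_le_one_of_add_le hc.integrable.swap hc.integral_snd hε₁ hε₂0 hε₁0
    ((Measure.measurePreserving_swap.quasiMeasurePreserving.ae hdom).mono fun _ h => by
      rwa [add_comm])
  obtain ⟨hfw, hfw_le⟩ := integral_sq_fst_mul_sub_le hc.nonneg hc.integrable hc.integral_fst hε₁0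
    hε₂ hf hf2 (hf.integrable_sq.mul_bdd hε₁.1 hε₁1)
  obtain ⟨hgw, hgw_le⟩ := integral_sq_snd_mul_sub_le hc.nonneg hc.integrable hc.integral_snd hε₁
    hε₂0 hg hg2 (hg.integrable_sq.mul_bdd hε₂.1 hε₂1)
  have hw0 : ∀ᵐ p ∂μ.prod ν, 0 ≤ c p.1 p.2 - ε₁ p.1 - ε₂ p.2 :=
    hdom.mono fun _ h => by linarith
  have hm : AEStronglyMeasurable (fun p => f p.1 * g p.2 * (c p.1 p.2 - ε₁ p.1 - ε₂ p.2))
      (μ.prod ν) :=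
    (hf.1.comp_fst.mul hg.1.comp_snd).mul
      ((hc.integrable.1.sub hε₁.1.comp_fst).sub hε₂.1.comp_snd)
  have hfi : Integrable f μ := hf.integrable one_le_two
  have hgi : Integrable g ν := hg.integrable one_le_two
  obtain ⟨hfgε, hfgε0⟩ := integral_mul_mul_add_eq_zero hfi hgi (hfi.mul_bdd hε₁.1 hε₁1)
    (hgi.mul_bdd hε₂.1 hε₂1) hf0 hg0
  have hcancel : ∫ p, f p.1 * g p.2 * c p.1 p.2 ∂μ.prod ν =
      ∫ p, f p.1 * g p.2 * (c p.1 p.2 - ε₁ p.1 - ε₂ p.2) ∂μ.prod ν := by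
    have hsplit : (fun p : α × β => f p.1 * g p.2 * c p.1 p.2) = fun p =>
        f p.1 * g p.2 * (c p.1 p.2 - ε₁ p.1 - ε₂ p.2) + f p.1 * g p.2 * (ε₁ p.1 + ε₂ p.2) := by
      ext; ring
    rw [hsplit, integral_add (integrable_mul_mul_of_sq_mul hw0 hm hfw hgw) hfgε, hfgε0, add_zero]
  calc |∫ p, f p.1 * g p.2 * c p.1 p.2 ∂μ.prod ν|
      ≤ ((∫ p, f p.1 ^ 2 * (c p.1 p.2 - ε₁ p.1 - ε₂ p.2) ∂μ.prod ν) +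
          ∫ p, g p.2 ^ 2 * (c p.1 p.2 - ε₁ p.1 - ε₂ p.2) ∂μ.prod ν) / 2 :=
        hcancel ▸ abs_integral_mul_mul_le hw0 hm hfw hgw
    _ ≤ 1 - 1 / 2 * ((∫ x, ε₁ x ∂μ) + ∫ y, ε₂ y ∂ν) := by linarith

end CopulaDensity

theorem copula_density_rho_one_lt_one
    (c : ℝ → ℝ → ℝ) (ε₁ ε₂ : ℝ → ℝ)
    (hc_nonneg : ∀ᵐ p ∂(volume.restrict (Set.Icc (0:ℝ) 1 ×ˢ Set.Icc (0:ℝ) 1)),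
      0 ≤ c p.1 p.2)
    (hc_int : IntegrableOn (fun p : ℝ × ℝ => c p.1 p.2)
      (Set.Icc (0:ℝ) 1 ×ˢ Set.Icc (0:ℝ) 1))
    (hmarg1 : ∀ᵐ x ∂(volume.restrict (Set.Icc (0:ℝ) 1)),
      ∫ y in Set.Icc (0:ℝ) 1, c x y = 1)
    (hmarg2 : ∀ᵐ y ∂(volume.restrict (Set.Icc (0:ℝ) 1)),
      ∫ x in Set.Icc (0:ℝ) 1, c x y = 1)
    (hε₁_nonneg : ∀ x ∈ Set.Icc (0:ℝ) 1, 0 ≤ ε₁ x)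
    (hε₂_nonneg : ∀ x ∈ Set.Icc (0:ℝ) 1, 0 ≤ ε₂ x)
    (hε₁_int : IntegrableOn ε₁ (Set.Icc (0:ℝ) 1))
    (hε₂_int : IntegrableOn ε₂ (Set.Icc (0:ℝ) 1))
    (hdom : ∀ᵐ p ∂(volume.restrict (Set.Icc (0:ℝ) 1 ×ˢ Set.Icc (0:ℝ) 1)),
      ε₁ p.1 + ε₂ p.2 ≤ c p.1 p.2)
    (hpos : 0 < (∫ x in Set.Icc (0:ℝ) 1, ε₁ x) + ∫ y in Set.Icc (0:ℝ) 1, ε₂ y) :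
    sSup {r : ℝ | ∃ f g : ℝ → ℝ,
        MemLp f 2 (volume.restrict (Set.Icc (0:ℝ) 1)) ∧
        MemLp g 2 (volume.restrict (Set.Icc (0:ℝ) 1)) ∧
        (∫ x in Set.Icc (0:ℝ) 1, (f x) ^ 2) = 1 ∧
        (∫ x in Set.Icc (0:ℝ) 1, (g x) ^ 2) = 1 ∧
        (∫ x in Set.Icc (0:ℝ) 1, f x) = 0 ∧
        (∫ x in Set.Icc (0:ℝ) 1, g x) = 0 ∧
        r = |∫ p in Set.Icc (0:ℝ) 1 ×ˢ Set.Icc (0:ℝ) 1, f p.1 * g p.2 * c p.1 p.2|} ≤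
      1 - (1 / 2) * ((∫ x in Set.Icc (0:ℝ) 1, ε₁ x) + ∫ y in Set.Icc (0:ℝ) 1, ε₂ y) ∧
    1 - (1 / 2) * ((∫ x in Set.Icc (0:ℝ) 1, ε₁ x) + ∫ y in Set.Icc (0:ℝ) 1, ε₂ y) < 1 := by
  set μ : Measure ℝ := volume.restrict (Set.Icc (0:ℝ) 1)
  have : IsProbabilityMeasure μ := ⟨by simp [μ]⟩
  have hprod : volume.restrict (Set.Icc (0:ℝ) 1 ×ˢ Set.Icc (0:ℝ) 1) = μ.prod μ := by
    rw [Measure.volume_eq_prod, Measure.prod_restrict]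
  rw [IntegrableOn, hprod] at hc_int
  rw [hprod] at hc_nonneg hdom
  have hc : IsCopulaDensity μ μ c := ⟨hc_nonneg, hc_int, hmarg1, hmarg2⟩
  have hε₁0 : ∀ᵐ x ∂μ, 0 ≤ ε₁ x := ae_restrict_of_forall_mem measurableSet_Icc hε₁_nonneg
  have hε₂0 : ∀ᵐ y ∂μ, 0 ≤ ε₂ y := ae_restrict_of_forall_mem measurableSet_Icc hε₂_nonneg
  refine ⟨Real.sSup_le ?_ ?_, by linarith⟩
  · rintro _ ⟨f, g, hf, hg, hf2, hg2, hf0, hg0, rfl⟩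
    rw [hprod]
    exact hc.abs_integral_mul_mul_le_one_sub hε₁_int hε₂_int hε₁0 hε₂0 hdom hf hg hf2 hg2 hf0 hg0
  · linarith [integral_add_integral_le_one hc.integrable hc.integral_fst hε₁_int hε₂_int hdom]
end
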